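/- (Duality for entropy minimization) Let A be an N×m matrix, y ∈ ℝ^N, a_j < b_j, and suppose λ* is a maximizer of Σ(y,λ) = ⟨λ,y⟩ − M(Aᵗλ) over ℝ^N. Then x* given componentwise by x*_j = (a_j e^{a_j(Aᵗλ*)_j} + b_j e^{b_j(Aᵗλ*)_j})/(e^{a_j(Aᵗλ*)_j} + e^{b_j(Aᵗλ*)_j}) minimizes Ψ(x) over {x ∈ ∏(a_j,b_j) : Ax = y}, and Ψ(x*) = Σ(y, λ*). -/

import Mathlib

/-!
Weak duality is the coordinatewise Fenchel–Young inequality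
`x τ - log (e^{aτ} + e^{bτ}) ≤ ψ(x)` between the box entropy `ψ` and the two-point log-partition
function, summed over `j` with `τ = Aᵀλ` and combined with `⟨λ, A x⟩ = ⟨Aᵀλ, x⟩`.
At a maximizer `λ*` of the dual the gradient `y - A x*` vanishes, because `x*_j` is the derivative
of the `j`-th log-partition term at `(Aᵀλ*)_j`; and for this `x*` Fenchel–Young is an equality,
so the duality gap closes.
-/

open Matrix Real Set

noncomputable section

/-- The summand of `Ψ`. -/
def boxEntropy (a b x : ℝ) : ℝ :=
  (x - a) / (b - a) * log ((x - a) / (b - a)) + (b - x) / (b - a) * log ((b - x) / (b - a))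

/-- The summand of `M`. -/
def boxLogPartition (a b τ : ℝ) : ℝ :=
  log (exp (a * τ) + exp (b * τ))

def boxMean (a b τ : ℝ) : ℝ :=
  (a * exp (a * τ) + b * exp (b * τ)) / (exp (a * τ) + exp (b * τ))

end

theorem boxMean_mem_Ioo {a b : ℝ} (hab : a < b) (τ : ℝ) : boxMean a b τ ∈ Ioo a b := by
  have ha := exp_pos (a * τ)
  have hb := exp_pos (b * τ)
  constructor
  · rw [boxMean, lt_div_iff₀ (by positivity)]; nlinarith
  · rw [boxMean, div_lt_iff₀ (by positivity)]; nlinarith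

theorem hasDerivAt_boxLogPartition (a b τ : ℝ) :
    HasDerivAt (boxLogPartition a b) (boxMean a b τ) τ := by
  have hlin (c : ℝ) : HasDerivAt (fun t => exp (c * t)) (exp (c * τ) * c) τ :=
    ((hasDerivAt_id τ).const_mul c).exp.congr_deriv (by simp)
  convert ((hlin a).add (hlin b)).log (add_pos (exp_pos _) (exp_pos _)).ne' using 1
  · rfl
  · simp only [boxMean, Pi.add_apply]
    ring

theorem mul_add_mul_sub_log_exp_add_exp_le {p q u v : ℝ} (hp : 0 < p) (hq : 0 < q)
    (hpq : p + q = 1) :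
    p * u + q * v - log (exp u + exp v) ≤ p * log p + q * log q := by
  -- concavity of `log` at the points `e^u / p` and `e^v / q` with weights `p` and `q`
  have hconc := strictConcaveOn_log_Ioi.concaveOn.2 (mem_Ioi.2 (div_pos (exp_pos u) hp))
    (mem_Ioi.2 (div_pos (exp_pos v) hq)) hp.le hq.le hpq
  simp only [smul_eq_mul, mul_div_cancel₀ _ hp.ne', mul_div_cancel₀ _ hq.ne',
    log_div (exp_pos _).ne' hp.ne', log_div (exp_pos _).ne' hq.ne', log_exp] at hconc
  linarith

theorem mul_sub_boxLogPartition_le_boxEntropy {a b x : ℝ} (hx : x ∈ Ioo a b) (τ : ℝ) :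
    x * τ - boxLogPartition a b τ ≤ boxEntropy a b x := by
  have hD : 0 < b - a := by linarith [hx.1, hx.2]
  have hle := mul_add_mul_sub_log_exp_add_exp_le (div_pos (sub_pos.2 hx.2) hD)
    (div_pos (sub_pos.2 hx.1) hD) (by field_simp; ring) (u := a * τ) (v := b * τ)
  have hxτ : (b - x) / (b - a) * (a * τ) + (x - a) / (b - a) * (b * τ) = x * τ := by
    field_simp; ring
  rw [boxLogPartition, boxEntropy]
  linarith

theorem boxEntropy_boxMean {a b : ℝ} (hab : a < b) (τ : ℝ) :
    boxEntropy a b (boxMean a b τ) = boxMean a b τ * τ - boxLogPartition a b τ := by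
  have hD : b - a ≠ 0 := (sub_pos.2 hab).ne'
  have hS : 0 < exp (a * τ) + exp (b * τ) := by positivity
  have hp : (boxMean a b τ - a) / (b - a) = exp (b * τ) / (exp (a * τ) + exp (b * τ)) := by
    rw [boxMean]; field_simp; ring
  have hq : (b - boxMean a b τ) / (b - a) = exp (a * τ) / (exp (a * τ) + exp (b * τ)) := by
    rw [boxMean]; field_simp; ring
  rw [boxEntropy, hp, hq, log_div (exp_pos _).ne' hS.ne', log_div (exp_pos _).ne' hS.ne',
    log_exp, log_exp, boxLogPartition, boxMean]
  field_simp
  ring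

section Duality

variable {ι κ : Type*} [Fintype ι] [Fintype κ] (A : Matrix ι κ ℝ)

theorem dotProduct_sub_sum_eq_sum_of_mulVec_eq {x : κ → ℝ} {y : ι → ℝ} (hAx : A *ᵥ x = y)
    (L : κ → ℝ → ℝ) (lam : ι → ℝ) :
    lam ⬝ᵥ y - ∑ j, L j ((Aᵀ *ᵥ lam) j) = ∑ j, (x j * (Aᵀ *ᵥ lam) j - L j ((Aᵀ *ᵥ lam) j)) := by
  rw [Finset.sum_sub_distrib, ← hAx, dotProduct_mulVec, ← mulVec_transpose, dotProduct_comm]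
  rfl

theorem mulVec_eq_of_maximizes_dual (y : ι → ℝ) (L : κ → ℝ → ℝ) {x : κ → ℝ} {lam : ι → ℝ}
    (hL : ∀ j, HasDerivAt (L j) (x j) ((Aᵀ *ᵥ lam) j))
    (hmax : ∀ μ, μ ⬝ᵥ y - ∑ j, L j ((Aᵀ *ᵥ μ) j) ≤ lam ⬝ᵥ y - ∑ j, L j ((Aᵀ *ᵥ lam) j)) :
    A *ᵥ x = y := by
  set d := y - A *ᵥ x
  set g : ℝ → ℝ := fun t => (lam + t • d) ⬝ᵥ y - ∑ j, L j ((Aᵀ *ᵥ (lam + t • d)) j)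
  have hline (t : ℝ) (j : κ) : (Aᵀ *ᵥ (lam + t • d)) j = (Aᵀ *ᵥ lam) j + t * (Aᵀ *ᵥ d) j := by
    simp [mulVec_add, mulVec_smul]
  have hderiv : HasDerivAt g (d ⬝ᵥ y - d ⬝ᵥ (A *ᵥ x)) 0 := by
    have hlin : HasDerivAt (fun t : ℝ => (lam + t • d) ⬝ᵥ y) (d ⬝ᵥ y) 0 := by
      simp only [add_dotProduct, smul_dotProduct, smul_eq_mul]
      simpa using ((hasDerivAt_id (0 : ℝ)).mul_const (d ⬝ᵥ y)).const_add (lam ⬝ᵥ y)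
    have hterm (j : κ) : HasDerivAt (fun t : ℝ => L j ((Aᵀ *ᵥ (lam + t • d)) j))
        (x j * (Aᵀ *ᵥ d) j) 0 := by
      simp only [hline]
      refine (hL j).comp_of_eq 0 ?_ (by simp)
      simpa using ((hasDerivAt_id (0 : ℝ)).mul_const ((Aᵀ *ᵥ d) j)).const_add ((Aᵀ *ᵥ lam) j)
    refine (hlin.sub (HasDerivAt.fun_sum fun j _ => hterm j)).congr_deriv ?_
    rw [dotProduct_mulVec, ← mulVec_transpose, dotProduct_comm _ x]
    rfl
  have hg0 : g 0 = lam ⬝ᵥ y - ∑ j, L j ((Aᵀ *ᵥ lam) j) := by simp [g]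
  have hmax0 : IsLocalMax g 0 := Filter.Eventually.of_forall fun t => hg0 ▸ hmax _
  have hd : d ⬝ᵥ d = 0 := by
    rw [← hmax0.hasDerivAt_eq_zero hderiv, ← dotProduct_sub]
  exact (sub_eq_zero.1 (dotProduct_self_eq_zero.1 hd)).symm

variable {a b : κ → ℝ}

theorem dual_le_boxEntropy {x : κ → ℝ} (hx : ∀ j, x j ∈ Ioo (a j) (b j)) {y : ι → ℝ}
    (hAx : A *ᵥ x = y) (lam : ι → ℝ) :
    lam ⬝ᵥ y - ∑ j, boxLogPartition (a j) (b j) ((Aᵀ *ᵥ lam) j) ≤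
      ∑ j, boxEntropy (a j) (b j) (x j) := by
  rw [dotProduct_sub_sum_eq_sum_of_mulVec_eq A hAx]
  exact Finset.sum_le_sum fun j _ => mul_sub_boxLogPartition_le_boxEntropy (hx j) _

theorem boxEntropy_boxMean_eq_dual (hab : ∀ j, a j < b j) {y : ι → ℝ} (lam : ι → ℝ)
    (hAx : A *ᵥ (fun j => boxMean (a j) (b j) ((Aᵀ *ᵥ lam) j)) = y) :
    ∑ j, boxEntropy (a j) (b j) (boxMean (a j) (b j) ((Aᵀ *ᵥ lam) j)) =
      lam ⬝ᵥ y - ∑ j, boxLogPartition (a j) (b j) ((Aᵀ *ᵥ lam) j) := by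
  rw [dotProduct_sub_sum_eq_sum_of_mulVec_eq A hAx]
  exact Finset.sum_congr rfl fun j _ => boxEntropy_boxMean (hab j) _

end Duality

/-- **Duality for entropy minimization.** If `λ*` maximizes
`Σ(y,λ) = ⟨λ,y⟩ − M(Aᵗλ)` over `ℝ^N`, then the entropic reconstruction `x*` lies in the open
box, satisfies `A x* = y`, minimizes `Ψ` over `{x ∈ ∏(a_j,b_j) : Ax = y}`, and
`Ψ(x*) = Σ(y,λ*)`. -/
theorem stmt_12 (N m : ℕ) (A : Matrix (Fin N) (Fin m) ℝ) (y : Fin N → ℝ)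
    (a b : Fin m → ℝ) (hab : ∀ j, a j < b j)
    (M : (Fin m → ℝ) → ℝ)
    (hM : ∀ τ, M τ = ∑ j, Real.log (Real.exp (a j * τ j) + Real.exp (b j * τ j)))
    (Psi : (Fin m → ℝ) → ℝ)
    (hPsi : ∀ x, Psi x = ∑ j,
      (((x j - a j) / (b j - a j)) * Real.log ((x j - a j) / (b j - a j))
        + ((b j - x j) / (b j - a j)) * Real.log ((b j - x j) / (b j - a j))))
    (Sig : (Fin N → ℝ) → ℝ)
    (hSig : ∀ lam, Sig lam = (∑ i, lam i * y i) - M (Aᵀ *ᵥ lam))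
    (lamStar : Fin N → ℝ)
    (hmax : ∀ lam, Sig lam ≤ Sig lamStar)
    (xStar : Fin m → ℝ)
    (hx : ∀ j, xStar j =
      (a j * Real.exp (a j * (Aᵀ *ᵥ lamStar) j) + b j * Real.exp (b j * (Aᵀ *ᵥ lamStar) j))
        / (Real.exp (a j * (Aᵀ *ᵥ lamStar) j) + Real.exp (b j * (Aᵀ *ᵥ lamStar) j))) :
    (∀ j, xStar j ∈ Set.Ioo (a j) (b j)) ∧ A.mulVec xStar = y ∧
      (∀ x : Fin m → ℝ, (∀ j, x j ∈ Set.Ioo (a j) (b j)) → A.mulVec x = y →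
        Psi xStar ≤ Psi x) ∧
      Psi xStar = Sig lamStar := by
  obtain rfl : xStar = fun j => boxMean (a j) (b j) ((Aᵀ *ᵥ lamStar) j) := funext hx
  have hSig' (lam : Fin N → ℝ) :
      Sig lam = lam ⬝ᵥ y - ∑ j, boxLogPartition (a j) (b j) ((Aᵀ *ᵥ lam) j) := by
    rw [hSig, hM]; rfl
  have hPsi' (x : Fin m → ℝ) : Psi x = ∑ j, boxEntropy (a j) (b j) (x j) := hPsi x
  have hAx := mulVec_eq_of_maximizes_dual A y (fun j => boxLogPartition (a j) (b j))
    (fun j => hasDerivAt_boxLogPartition _ _ _) fun μ => by simpa only [hSig'] using hmax μ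
  have hgap : Psi (fun j => boxMean (a j) (b j) ((Aᵀ *ᵥ lamStar) j)) = Sig lamStar := by
    rw [hPsi', hSig']
    exact boxEntropy_boxMean_eq_dual A hab lamStar hAx
  refine ⟨fun j => boxMean_mem_Ioo (hab j) _, hAx, fun x hxbox hxA => ?_, hgap⟩
  rw [hgap, hSig', hPsi']
  exact dual_le_boxEntropy A hxbox hxA lamStar
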